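/- arXiv:1806.00214 — 3 statements merged into one kernel-verified Lean document; each statement's English description precedes it below -/
import Mathlib

section
/- Let G be a strongly connected oriented graph (countable vertex set) and u a vertex. Let f_{uu}(n) be the number of first-return loops at u of length n, L = L_{uu} the radius of convergence of ∑ f_{uu}(n) zⁿ, and R the common radius of convergence of the series ∑ p_{uv}(n) zⁿ counting all paths. Then R < L if and only if ∑_{n≥1} f_{uu}(n) Lⁿ > 1. -/
/-- Number of paths of length n from u to v in the oriented graph with adjacency
relation Adj. -/
noncomputable def pathCount {V : Type*} (Adj : V → V → Prop) (u v : V) (n : ℕ) : ℕ :=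
  Nat.card {w : Fin (n + 1) → V // w 0 = u ∧ w (Fin.last n) = v ∧
    ∀ i : Fin n, Adj (w i.castSucc) (w i.succ)}

/-- Number of first-return loops at u of length n: paths from u to u of length n
not visiting u strictly in between. -/
noncomputable def firstReturnCount {V : Type*} (Adj : V → V → Prop) (u : V) (n : ℕ) : ℕ :=
  Nat.card {w : Fin (n + 1) → V // w 0 = u ∧ w (Fin.last n) = u ∧
    (∀ i : Fin n, Adj (w i.castSucc) (w i.succ)) ∧
    ∀ i : Fin (n + 1), i ≠ 0 → i ≠ Fin.last n → w i ≠ u}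

/-- A graph is strongly connected if there is a (nonempty) path between any two
vertices. -/
def StronglyConnected {V : Type*} (Adj : V → V → Prop) : Prop :=
  ∀ u v : V, ∃ n : ℕ, 0 < n ∧ 0 < pathCount Adj u v n

/-- R is the radius of convergence of the power series ∑ g(n) zⁿ. -/
def IsRadius (g : ℕ → ℝ) (R : ℝ) : Prop :=
  0 ≤ R ∧ ∀ x : ℝ, 0 ≤ x →
    (x < R → Summable (fun n => g n * x ^ n)) ∧
    (R < x → ¬ Summable (fun n => g n * x ^ n))

/-!
Cutting a loop at `u` at its first return to `u` gives the renewal identity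
`p(n+1) = ∑_{k+j=n} f(k+1) p(j)` for `p = pathCount Adj u u` and `f = firstReturnCount Adj u`,
that is `P = 1 + F · P` for the generating functions `P(x) = ∑ p(n) xⁿ`, `F(x) = ∑ f(n+1) xⁿ⁺¹`.
Hence `P(x) = ∞` as soon as `F(x) > 1`, while `F(x) < 1` bounds every partial sum of `P(x)` by
`∑ F(x)ᵏ < ∞`. As `F` is strictly increasing and left-continuous on `[0, ∞)`, this makes `R < L`
equivalent to `F(L) > 1`.

The path counts are `Nat.card`s, which vanish on infinite sets; the renewal identity therefore
needs finitely many loops of each length. If there were infinitely many loops of some length `n`,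
`pathCount Adj u u` would vanish beyond the first nonzero value of each residue class mod `n`,
hence be finitely supported, contradicting the finiteness of its radius of convergence `R`.
-/

open Finset
open scoped ENNReal

theorem IsRadius.infinite_support {g : ℕ → ℝ} {R : ℝ} (h : IsRadius g R) :
    (Function.support g).Infinite := fun hfin =>
  (h.2 (R + 1) (by linarith [h.1])).2 (by linarith)
    (summable_of_hasFiniteSupport (hfin.subset (Function.support_mul_subset_left _ _)))

namespace OrientedGraph

variable {V : Type*}

def restrictEquiv (n : ℕ) : {w : ℕ → V // ∀ i, n ≤ i → w i = w n} ≃ (Fin (n + 1) → V) where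
  toFun w i := w.1 i
  invFun w := ⟨fun i => w ⟨min i n, by omega⟩, fun i hi => by simp [min_eq_right hi]⟩
  left_inv w := by
    ext i
    rcases le_total i n with h | h
    · simp [min_eq_left h]
    · simp [min_eq_right h, w.2 i h]
  right_inv w := by
    ext i
    simp [min_eq_left (Nat.lt_succ_iff.mp i.2)]

theorem natCard_subtype_fin_eq (n : ℕ) (P : (Fin (n + 1) → V) → Prop) :
    Nat.card {w : Fin (n + 1) → V // P w} =
      Nat.card {w : ℕ → V // (∀ i, n ≤ i → w i = w n) ∧ P (fun i => w i)} :=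
  Nat.card_congr (((restrictEquiv n).subtypeEquiv fun _ => Iff.rfl).symm.trans
    (Equiv.subtypeSubtypeEquivSubtypeInter (fun w : ℕ → V => ∀ i, n ≤ i → w i = w n)
      fun w => P fun i => w i))

variable (Adj : V → V → Prop)

-- A path of length `n` is encoded as a sequence on `ℕ` that stays at its endpoint from time `n`
-- on, so that concatenation needs no `Fin` arithmetic.
def pathSet (u v : V) (n : ℕ) : Set (ℕ → V) :=
  {w | w 0 = u ∧ (∀ i, n ≤ i → w i = v) ∧ ∀ i < n, Adj (w i) (w (i + 1))}

def firstReturnSet (u : V) (n : ℕ) : Set (ℕ → V) :=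
  {w | w ∈ pathSet Adj u u n ∧ ∀ i, 0 < i → i < n → w i ≠ u}

theorem pathCount_eq_natCard (u v : V) (n : ℕ) :
    pathCount Adj u v n = Nat.card (pathSet Adj u v n) := by
  rw [pathCount, natCard_subtype_fin_eq]
  refine Nat.card_congr (Equiv.subtypeEquivRight fun w => ?_)
  simp only [Fin.val_zero, Fin.val_last, Fin.val_castSucc, Fin.val_succ, Fin.forall_iff,
    pathSet, Set.mem_ofPred_eq]
  constructor
  · rintro ⟨hconst, h0, hn, hadj⟩
    exact ⟨h0, fun i hi => (hconst i hi).trans hn, hadj⟩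
  · rintro ⟨h0, hv, hadj⟩
    exact ⟨fun i hi => (hv i hi).trans (hv n le_rfl).symm, h0, hv n le_rfl, hadj⟩

theorem firstReturnCount_eq_natCard (u : V) (n : ℕ) :
    firstReturnCount Adj u n = Nat.card (firstReturnSet Adj u n) := by
  rw [firstReturnCount, natCard_subtype_fin_eq]
  refine Nat.card_congr (Equiv.subtypeEquivRight fun w => ?_)
  simp only [Fin.val_zero, Fin.val_last, Fin.val_castSucc, Fin.val_succ, Fin.forall_iff,
    firstReturnSet, pathSet, Set.mem_ofPred_eq, ne_eq, Fin.ext_iff]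
  constructor
  · rintro ⟨hconst, h0, hn, hadj, hint⟩
    exact ⟨⟨h0, fun i hi => (hconst i hi).trans hn, hadj⟩,
      fun i hi0 hin => hint i (by omega) (by omega) (by omega)⟩
  · rintro ⟨⟨h0, hv, hadj⟩, hint⟩
    exact ⟨fun i hi => (hv i hi).trans (hv n le_rfl).symm, h0, hv n le_rfl, hadj,
      fun i _ hi0 hin => hint i (by omega) (by omega)⟩

variable {Adj}

def append (a : ℕ) (w₁ w₂ : ℕ → V) : ℕ → V := fun i => if i < a then w₁ i else w₂ (i - a)

section Append

variable {a i : ℕ} {w₁ w₂ : ℕ → V}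

theorem append_of_lt (h : i < a) : append a w₁ w₂ i = w₁ i := if_pos h

theorem append_of_le (h : a ≤ i) : append a w₁ w₂ i = w₂ (i - a) := if_neg h.not_gt

theorem append_of_le_of_eq (hw : w₂ 0 = w₁ a) (h : i ≤ a) : append a w₁ w₂ i = w₁ i := by
  rcases h.lt_or_eq with h | rfl
  · exact append_of_lt h
  · rw [append_of_le le_rfl, Nat.sub_self, hw]

end Append

theorem append_mem_pathSet {u v w : V} {a b : ℕ} {w₁ w₂ : ℕ → V} (h₁ : w₁ ∈ pathSet Adj u v a)
    (h₂ : w₂ ∈ pathSet Adj v w b) : append a w₁ w₂ ∈ pathSet Adj u w (a + b) := by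
  obtain ⟨h₁0, h₁v, h₁adj⟩ := h₁
  obtain ⟨h₂0, h₂w, h₂adj⟩ := h₂
  have hglue : w₂ 0 = w₁ a := h₂0.trans (h₁v a le_rfl).symm
  refine ⟨?_, fun i hi => ?_, fun i hi => ?_⟩
  · rw [append_of_le_of_eq hglue a.zero_le, h₁0]
  · rw [append_of_le (by omega)]
    exact h₂w _ (by omega)
  · by_cases hia : i < a
    · rw [append_of_le_of_eq hglue hia.le, append_of_le_of_eq hglue hia]
      exact h₁adj i hia
    · rw [append_of_le (by omega), append_of_le (by omega), Nat.sub_add_comm (by omega)]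
      exact h₂adj _ (by omega)

theorem eq_of_append_eq {u v : V} {a : ℕ} {w₁ w₂ w₁' w₂' : ℕ → V} (h₁ : w₁ ∈ pathSet Adj u v a)
    (h₁' : w₁' ∈ pathSet Adj u v a) (h : append a w₁ w₂ = append a w₁' w₂') :
    w₁ = w₁' ∧ w₂ = w₂' := by
  refine ⟨funext fun i => ?_, funext fun j => ?_⟩
  · by_cases hi : i < a
    · simpa [append_of_lt hi] using congrFun h i
    · rw [h₁.2.1 i (by omega), h₁'.2.1 i (by omega)]
  · simpa [append_of_le (Nat.le_add_right a j)] using congrFun h (a + j)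

theorem append_ne_of_firstReturn {u : V} {a a' : ℕ} {w₁ w₂ w₁' w₂' : ℕ → V}
    (h₁' : w₁' ∈ firstReturnSet Adj u a') (h₂ : w₂ 0 = u) (ha : 0 < a) (haa' : a < a') :
    append a w₁ w₂ ≠ append a' w₁' w₂' := fun h => by
  have := congrFun h a
  rw [append_of_le le_rfl, Nat.sub_self, h₂, append_of_lt haa'] at this
  exact h₁'.2 a ha haa' this.symm

theorem exists_append_firstReturn {u : V} {n : ℕ} {w : ℕ → V} (hw : w ∈ pathSet Adj u u (n + 1)) :
    ∃ k j, k + j = n ∧ ∃ w₁ ∈ firstReturnSet Adj u (k + 1), ∃ w₂ ∈ pathSet Adj u u j,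
      append (k + 1) w₁ w₂ = w := by
  classical
  obtain ⟨hw0, hwu, hadj⟩ := hw
  have hex : ∃ t, 0 < t ∧ w t = u := ⟨n + 1, n.succ_pos, hwu _ le_rfl⟩
  obtain ⟨k, hk⟩ : ∃ k, Nat.find hex = k + 1 :=
    ⟨_, (Nat.succ_pred_eq_of_pos (Nat.find_spec hex).1).symm⟩
  have hT : w (k + 1) = u := hk ▸ (Nat.find_spec hex).2
  have hmin : ∀ t, 0 < t → t < k + 1 → w t ≠ u :=
    fun t ht0 ht hwt => Nat.find_min hex (hk ▸ ht) ⟨ht0, hwt⟩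
  have hkn : k + 1 ≤ n + 1 := hk ▸ Nat.find_min' hex ⟨n.succ_pos, hwu _ le_rfl⟩
  refine ⟨k, n - k, by omega, fun i => w (min i (k + 1)), ⟨⟨?_, fun i hi => ?_, fun i hi => ?_⟩,
    fun i hi0 hi => ?_⟩, fun j => w (j + (k + 1)), ⟨?_, fun j hj => ?_, fun j hj => ?_⟩, ?_⟩
  · simpa using hw0
  · simpa [min_eq_right hi] using hT
  · simp only [min_eq_left hi.le, min_eq_left (Nat.succ_le_of_lt hi)]
    exact hadj i (by omega)
  · simpa [min_eq_left hi.le] using hmin i hi0 hi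
  · simpa using hT
  · exact hwu _ (by omega)
  · simpa [add_right_comm j 1] using hadj (j + (k + 1)) (by omega)
  · funext i
    by_cases hi : i < k + 1
    · simp [append_of_lt hi, min_eq_left hi.le]
    · simp [append_of_le (not_lt.1 hi), Nat.sub_add_cancel (not_lt.1 hi)]

theorem pathCount_succ {u : V} (hfin : ∀ n, (pathSet Adj u u n).Finite) (n : ℕ) :
    pathCount Adj u u (n + 1) =
      ∑ kj ∈ antidiagonal n, firstReturnCount Adj u (kj.1 + 1) * pathCount Adj u u kj.2 := by
  have (k : ℕ) : Finite (pathSet Adj u u k) := (hfin k).to_subtype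
  have (k : ℕ) : Finite (firstReturnSet Adj u k) := ((hfin k).subset fun _ h => h.1).to_subtype
  let Φ : (Σ kj : antidiagonal n, firstReturnSet Adj u (kj.1.1 + 1) × pathSet Adj u u kj.1.2) →
      pathSet Adj u u (n + 1) := fun x =>
    ⟨append (x.1.1.1 + 1) x.2.1 x.2.2, by
      simpa [add_right_comm, HasAntidiagonal.mem_antidiagonal.mp x.1.2] using
        append_mem_pathSet x.2.1.2.1 x.2.2.2⟩
  have hΦ : Function.Bijective Φ := by
    refine ⟨?_, ?_⟩
    · rintro ⟨⟨⟨k, j⟩, hkj⟩, ⟨w₁, h₁⟩, ⟨w₂, h₂⟩⟩ ⟨⟨⟨k', j'⟩, hkj'⟩, ⟨w₁', h₁'⟩, ⟨w₂', h₂'⟩⟩ h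
      simp only [Φ, Subtype.mk.injEq] at h
      obtain rfl : k = k' := by
        rcases lt_trichotomy k k' with hlt | heq | hlt
        · exact absurd h (append_ne_of_firstReturn h₁' h₂.1 k.succ_pos (by omega))
        · exact heq
        · exact absurd h.symm (append_ne_of_firstReturn h₁ h₂'.1 k'.succ_pos (by omega))
      obtain rfl : j = j' := by rw [HasAntidiagonal.mem_antidiagonal] at hkj hkj'; omega
      obtain ⟨rfl, rfl⟩ := eq_of_append_eq h₁.1 h₁'.1 h
      rfl
    · rintro ⟨w, hw⟩
      obtain ⟨k, j, hkj, w₁, h₁, w₂, h₂, rfl⟩ := exists_append_firstReturn hw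
      exact ⟨⟨⟨(k, j), HasAntidiagonal.mem_antidiagonal.2 hkj⟩, ⟨w₁, h₁⟩, ⟨w₂, h₂⟩⟩, rfl⟩
  rw [pathCount_eq_natCard, ← Nat.card_eq_of_bijective Φ hΦ, Nat.card_sigma]
  simp only [Nat.card_prod, pathCount_eq_natCard, firstReturnCount_eq_natCard]
  exact sum_coe_sort _ fun kj : ℕ × ℕ =>
    Nat.card (firstReturnSet Adj u (kj.1 + 1)) * Nat.card (pathSet Adj u u kj.2)

theorem pathSet_self_zero (u : V) : pathSet Adj u u 0 = {fun _ => u} := by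
  ext w
  refine ⟨fun hw => funext fun i => hw.2.1 i i.zero_le, ?_⟩
  rintro rfl
  exact ⟨rfl, fun _ _ => rfl, fun i hi => absurd hi i.not_lt_zero⟩

theorem pathCount_self_zero (u : V) : pathCount Adj u u 0 = 1 := by
  rw [pathCount_eq_natCard, pathSet_self_zero]
  exact Nat.card_unique

theorem pathSet_add_infinite {u v w : V} {a b : ℕ} (h₁ : (pathSet Adj u v a).Infinite)
    (h₂ : (pathSet Adj v w b).Nonempty) : (pathSet Adj u w (a + b)).Infinite := by
  obtain ⟨w₂, hw₂⟩ := h₂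
  refine (h₁.image (f := fun w₁ => append a w₁ w₂) fun w₁ hw₁ w₁' hw₁' h => (eq_of_append_eq hw₁ hw₁' h).1).mono ?_
  rintro _ ⟨w₁, hw₁, rfl⟩
  exact append_mem_pathSet hw₁ hw₂

theorem pathSet_mul_infinite {u : V} {n : ℕ} (h : (pathSet Adj u u n).Infinite) (k : ℕ) :
    (pathSet Adj u u (n * (k + 1))).Infinite := by
  induction k with
  | zero => simpa using h
  | succ k ih => rw [mul_add_one]; exact pathSet_add_infinite ih h.nonempty

/-- Infinitely many loops of length `n` make `pathCount` vanish (as `Nat.card` of an infinite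
type) at every length congruent mod `n` to, and beyond, a length where it does not vanish. -/
theorem finite_support_pathCount {u : V} {n : ℕ} (hn : 0 < n) (h : (pathSet Adj u u n).Infinite) :
    (Function.support (pathCount Adj u u)).Finite := by
  by_contra hinf
  obtain ⟨N, hN, N', hN', hlt, hmod⟩ := Set.Infinite.exists_lt_map_eq_of_mapsTo hinf
    (f := (· % n)) (fun N _ => Nat.mod_lt N hn) (Set.finite_Iio n)
  obtain ⟨k, hk⟩ := (Nat.modEq_iff_dvd' hlt.le).1 hmod
  obtain ⟨k, rfl⟩ : ∃ k', k = k' + 1 := Nat.exists_eq_succ_of_ne_zero (by rintro rfl; omega)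
  rw [Function.mem_support, pathCount_eq_natCard] at hN hN'
  have hinf' := pathSet_add_infinite (pathSet_mul_infinite h k)
    (Set.nonempty_coe_sort.1 (Nat.card_ne_zero.1 hN).1)
  rw [show n * (k + 1) + N = N' by omega] at hinf'
  have := hinf'.to_subtype
  exact hN' Nat.card_eq_zero_of_infinite

theorem pathSet_finite {u : V} {R : ℝ} (hR : IsRadius (fun n => (pathCount Adj u u n : ℝ)) R)
    (n : ℕ) : (pathSet Adj u u n).Finite := by
  by_contra h
  rcases n.eq_zero_or_pos with rfl | hn
  · exact h (pathSet_self_zero u ▸ Set.finite_singleton _)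
  · exact hR.infinite_support
      ((finite_support_pathCount hn h).subset fun N hN => by simpa using hN)

end OrientedGraph

theorem ENNReal.tsum_mul_tsum_eq_tsum_sum_antidiagonal (f g : ℕ → ℝ≥0∞) :
    (∑' n, f n) * ∑' n, g n = ∑' n, ∑ kl ∈ antidiagonal n, f kl.1 * g kl.2 := by
  simp_rw [← ENNReal.tsum_mul_right, ← ENNReal.tsum_mul_left]
  rw [← ENNReal.tsum_prod (f := fun a b => f a * g b),
    ← HasAntidiagonal.sigmaAntidiagonalEquivProd.tsum_eq, ENNReal.tsum_sigma']
  simp only [tsum_fintype, HasAntidiagonal.sigmaAntidiagonalEquivProd_apply]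
  exact tsum_congr fun n => sum_coe_sort _ fun kl : ℕ × ℕ => f kl.1 * g kl.2

namespace Renewal

theorem tsum_pow_succ_mul_tsum_pow (a b : ℕ → ℝ≥0∞) (x : ℝ≥0∞) :
    (∑' n, a (n + 1) * x ^ (n + 1)) * ∑' n, b n * x ^ n =
      ∑' n, (∑ ij ∈ antidiagonal n, a (ij.1 + 1) * b ij.2) * x ^ (n + 1) := by
  rw [ENNReal.tsum_mul_tsum_eq_tsum_sum_antidiagonal]
  refine tsum_congr fun n => ?_
  rw [sum_mul]
  refine sum_congr rfl fun ij hij => ?_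
  rw [← mem_antidiagonal.mp hij, add_right_comm, pow_add]
  ring

variable {p f : ℕ → ℕ}

theorem tsum_eq_one_add_mul (hp0 : p 0 = 1)
    (hren : ∀ n, p (n + 1) = ∑ ij ∈ antidiagonal n, f (ij.1 + 1) * p ij.2) (x : ℝ≥0∞) :
    ∑' n, (p n : ℝ≥0∞) * x ^ n =
      1 + (∑' n, (f (n + 1) : ℝ≥0∞) * x ^ (n + 1)) * ∑' n, (p n : ℝ≥0∞) * x ^ n := by
  rw [tsum_pow_succ_mul_tsum_pow (fun n => (f n : ℝ≥0∞)), tsum_eq_zero_add' ENNReal.summable]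
  simp [hp0, hren]

theorem sum_range_succ_le (hp0 : p 0 = 1)
    (hren : ∀ n, p (n + 1) = ∑ ij ∈ antidiagonal n, f (ij.1 + 1) * p ij.2) (x : ℝ≥0∞) (N : ℕ) :
    ∑ n ∈ range (N + 1), (p n : ℝ≥0∞) * x ^ n ≤
      1 + (∑' n, (f (n + 1) : ℝ≥0∞) * x ^ (n + 1)) * ∑ n ∈ range N, (p n : ℝ≥0∞) * x ^ n := by
  set q : ℕ → ℝ≥0∞ := fun n => if n < N then (p n : ℝ≥0∞) else 0
  have hq : ∑ n ∈ range N, (p n : ℝ≥0∞) * x ^ n = ∑' n, q n * x ^ n := by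
    rw [tsum_eq_sum (s := range N) fun n hn => by simp_all [q]]
    exact sum_congr rfl fun n hn => by simp_all [q]
  rw [hq, tsum_pow_succ_mul_tsum_pow (fun n => (f n : ℝ≥0∞)), sum_range_succ', hp0, add_comm]
  simp only [Nat.cast_one, pow_zero, mul_one]
  gcongr 1 + ?_
  refine le_trans (le_of_eq (sum_congr rfl fun n hn => ?_)) (ENNReal.sum_le_tsum _)
  rw [hren, Nat.cast_sum]
  refine congrArg (· * _) (sum_congr rfl fun ij hij => ?_)
  have : ij.2 < N := by have := mem_antidiagonal.mp hij; have := mem_range.mp hn; omega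
  simp [q, this]

theorem tsum_ne_top_of_lt_one (hp0 : p 0 = 1)
    (hren : ∀ n, p (n + 1) = ∑ ij ∈ antidiagonal n, f (ij.1 + 1) * p ij.2) {x : ℝ≥0∞}
    (hF : ∑' n, (f (n + 1) : ℝ≥0∞) * x ^ (n + 1) < 1) :
    ∑' n, (p n : ℝ≥0∞) * x ^ n ≠ ⊤ := by
  set F := ∑' n, (f (n + 1) : ℝ≥0∞) * x ^ (n + 1)
  have hc : 1 + F * ∑' k, F ^ k = ∑' k, F ^ k := by
    rw [← ENNReal.tsum_mul_left, tsum_eq_zero_add' (f := fun k => F ^ k) ENNReal.summable]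
    simp only [pow_zero, pow_succ']
  have hbound : ∀ N, ∑ n ∈ range N, (p n : ℝ≥0∞) * x ^ n ≤ ∑' k, F ^ k := by
    intro N
    induction N with
    | zero => simp
    | succ N ih => exact (sum_range_succ_le hp0 hren x N).trans (hc ▸ by gcongr)
  rw [ENNReal.tsum_eq_iSup_nat]
  refine ne_top_of_le_ne_top ?_ (iSup_le hbound)
  rw [ENNReal.tsum_geometric]
  exact ENNReal.inv_ne_top.mpr (tsub_pos_of_lt hF).ne'

theorem tsum_eq_top_of_one_lt (hp0 : p 0 = 1)
    (hren : ∀ n, p (n + 1) = ∑ ij ∈ antidiagonal n, f (ij.1 + 1) * p ij.2) {x : ℝ≥0∞}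
    (hF : 1 < ∑' n, (f (n + 1) : ℝ≥0∞) * x ^ (n + 1)) :
    ∑' n, (p n : ℝ≥0∞) * x ^ n = ⊤ := by
  by_contra hP
  have hrec := tsum_eq_one_add_mul hp0 hren x
  have hP0 : ∑' n, (p n : ℝ≥0∞) * x ^ n ≠ 0 := by rw [hrec]; simp
  have hlt := ENNReal.mul_lt_mul_right hP0 hP hF
  have hle : (∑' n, (p n : ℝ≥0∞) * x ^ n) * ∑' n, (f (n + 1) : ℝ≥0∞) * x ^ (n + 1) ≤
      ∑' n, (p n : ℝ≥0∞) * x ^ n := by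
    conv_rhs => rw [hrec]
    rw [mul_comm]
    exact le_add_self
  exact (hlt.trans_le hle).ne (mul_one _)

theorem exists_succ_ne_zero (hren : ∀ n, p (n + 1) = ∑ ij ∈ antidiagonal n, f (ij.1 + 1) * p ij.2)
    {n : ℕ} (hn : 0 < n) (hp : p n ≠ 0) : ∃ m, f (m + 1) ≠ 0 := by
  by_contra! hf
  obtain ⟨n, rfl⟩ := Nat.exists_eq_succ_of_ne_zero hn.ne'
  exact hp (by simp [hren, hf])

theorem tsum_pow_succ_lt_tsum_pow_succ {x y : ℝ≥0∞} (hxy : x < y)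
    (hy : ∑' n, (f (n + 1) : ℝ≥0∞) * y ^ (n + 1) ≠ ⊤) {m : ℕ} (hm : f (m + 1) ≠ 0) :
    ∑' n, (f (n + 1) : ℝ≥0∞) * x ^ (n + 1) < ∑' n, (f (n + 1) : ℝ≥0∞) * y ^ (n + 1) := by
  have hle : ∀ n, (f (n + 1) : ℝ≥0∞) * x ^ (n + 1) ≤ (f (n + 1) : ℝ≥0∞) * y ^ (n + 1) :=
    fun n => by gcongr
  refine ENNReal.tsum_lt_tsum (ne_top_of_le_ne_top hy (ENNReal.tsum_le_tsum hle)) hle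
    (i := m) ?_
  exact ENNReal.mul_lt_mul_right (by exact_mod_cast hm) (ENNReal.natCast_ne_top _)
    (ENNReal.pow_lt_pow_left m.succ_ne_zero hxy)

theorem exists_lt_of_lt_tsum_pow_succ {b y : ℝ≥0∞}
    (h : b < ∑' n, (f (n + 1) : ℝ≥0∞) * y ^ (n + 1)) :
    ∃ x < y, b < ∑' n, (f (n + 1) : ℝ≥0∞) * x ^ (n + 1) := by
  rw [ENNReal.tsum_eq_iSup_sum] at h
  obtain ⟨s, hs⟩ := lt_iSup_iff.mp h
  set g := fun x : ℝ≥0∞ => ∑ n ∈ s, (f (n + 1) : ℝ≥0∞) * x ^ (n + 1)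
  have hg : Continuous g := continuous_finsetSum _ fun n _ =>
    (ENNReal.continuous_const_mul (ENNReal.natCast_ne_top _)).comp (ENNReal.continuous_pow _)
  have hy0 : y ≠ 0 := by rintro rfl; simp at hs
  obtain ⟨l, hly, hl⟩ := exists_Ioc_subset_of_mem_nhds
    ((isOpen_Ioi.preimage hg).mem_nhds hs) ⟨0, pos_iff_ne_zero.mpr hy0⟩
  obtain ⟨x, hlx, hxy⟩ := exists_between hly
  exact ⟨x, hxy, (hl ⟨hlx, hxy.le⟩).trans_le (ENNReal.sum_le_tsum s)⟩

theorem summable_iff_tsum_ofReal_ne_top (a : ℕ → ℕ) {x : ℝ} (hx : 0 ≤ x) :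
    Summable (fun n => (a n : ℝ) * x ^ n) ↔ ∑' n, (a n : ℝ≥0∞) * ENNReal.ofReal x ^ n ≠ ⊤ := by
  lift x to NNReal using hx
  rw [ENNReal.ofReal_coe_nnreal]
  simp only [← NNReal.coe_natCast, ← NNReal.coe_pow, ← NNReal.coe_mul, NNReal.summable_coe,
    ← ENNReal.tsum_coe_ne_top_iff_summable, ENNReal.coe_mul, ENNReal.coe_pow, ENNReal.coe_natCast]

theorem lt_iff_one_lt_tsum (hp0 : p 0 = 1)
    (hren : ∀ n, p (n + 1) = ∑ ij ∈ antidiagonal n, f (ij.1 + 1) * p ij.2) {m : ℕ}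
    (hm : f (m + 1) ≠ 0) {R : ℝ} (hR : IsRadius (fun n => (p n : ℝ)) R) (L : ℝ) :
    R < L ↔ 1 < ∑' n, (f (n + 1) : ℝ≥0∞) * ENNReal.ofReal L ^ (n + 1) := by
  constructor
  · intro hRL
    by_contra! hF
    obtain ⟨x, hRx, hxL⟩ := exists_between hRL
    have hx0 : 0 ≤ x := hR.1.trans hRx.le
    have hFx := (tsum_pow_succ_lt_tsum_pow_succ
      ((ENNReal.ofReal_lt_ofReal_iff (hx0.trans_lt hxL)).2 hxL)
      (ne_top_of_le_ne_top ENNReal.one_ne_top hF) hm).trans_le hF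
    exact (hR.2 x hx0).2 hRx
      ((summable_iff_tsum_ofReal_ne_top p hx0).2 (tsum_ne_top_of_lt_one hp0 hren hFx))
  · intro hF
    obtain ⟨y, hyL, hy⟩ := exists_lt_of_lt_tsum_pow_succ hF
    have hRy : R ≤ y.toReal := not_lt.1 fun hyR => by
      have := (summable_iff_tsum_ofReal_ne_top p ENNReal.toReal_nonneg).1
        ((hR.2 _ ENNReal.toReal_nonneg).1 hyR)
      rw [ENNReal.ofReal_toReal hyL.ne_top] at this
      exact this (tsum_eq_top_of_one_lt hp0 hren hy)
    exact hRy.trans_lt ((ENNReal.lt_ofReal_iff_toReal_lt hyL.ne_top).1 hyL)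

end Renewal

theorem stmt_8_general {V : Type*} (Adj : V → V → Prop)
    (hSC : StronglyConnected Adj) (u : V) (R L : ℝ)
    (hR : ∀ v w : V, IsRadius (fun n => (pathCount Adj v w n : ℝ)) R) :
    R < L ↔
      1 < ∑' n : ℕ, (firstReturnCount Adj u (n + 1) : ENNReal) * ENNReal.ofReal L ^ (n + 1) := by
  have hren := OrientedGraph.pathCount_succ (OrientedGraph.pathSet_finite (hR u u))
  obtain ⟨n, hn, hpn⟩ := hSC u u
  obtain ⟨m, hm⟩ := Renewal.exists_succ_ne_zero hren hn hpn.ne'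
  exact Renewal.lt_iff_one_lt_tsum (OrientedGraph.pathCount_self_zero u) hren hm (hR u u) L

/-- For a strongly connected countable graph, R < L iff ∑_{n≥1} f_{uu}(n) Lⁿ > 1. -/
theorem stmt_8 {V : Type*} [Countable V] (Adj : V → V → Prop)
    (hSC : StronglyConnected Adj) (u : V) (R L : ℝ)
    (hR : ∀ v w : V, IsRadius (fun n => (pathCount Adj v w n : ℝ)) R)
    (hL : IsRadius (fun n => (firstReturnCount Adj u n : ℝ)) L) :
    R < L ↔
      1 < ∑' n : ℕ, (firstReturnCount Adj u (n + 1) : ENNReal) * ENNReal.ofReal L ^ (n + 1) :=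
  stmt_8_general Adj hSC u R L hR
end

section
/- Let f : ℕ → ℝ≥0 and define p(0) = 1, p(n) = ∑_{k=1}^{n} f(k) p(n−k) for n ≥ 1. Let L be the radius of convergence of ∑ f(n) zⁿ and R the radius of convergence of ∑ p(n) zⁿ. If ∑_{n≥1} f(n) Lⁿ ≤ 1 then R = L; consequently if R < L then ∑_{n≥1} f(n) Lⁿ > 1. -/
/-- Salama's criterion in renewal terms: if ∑_{n≥1} f(n) Lⁿ ≤ 1 then R = L;
consequently R < L implies ∑_{n≥1} f(n) Lⁿ > 1. -/
theorem stmt_14 (f : ℕ → ℝ) (hf : ∀ n, 0 ≤ f n) (p : ℕ → ℝ) (hp0 : p 0 = 1)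
    (hp : ∀ n : ℕ, 1 ≤ n → p n = ∑ k ∈ Finset.Icc 1 n, f k * p (n - k))
    (L R : ℝ) (hL : IsRadius f L) (hR : IsRadius p R) :
    ((∑' n : ℕ, ENNReal.ofReal (f (n + 1)) * ENNReal.ofReal L ^ (n + 1)) ≤ 1 → R = L) ∧
      (R < L → 1 < ∑' n : ℕ, ENNReal.ofReal (f (n + 1)) * ENNReal.ofReal L ^ (n + 1)) := by
  obtain ⟨hL0, hLspec⟩ := hL
  obtain ⟨hR0, hRspec⟩ := hR
  -- p is nonnegative
  have hpn : ∀ n, 0 ≤ p n := by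
    intro n
    induction n using Nat.strong_induction_on with
    | _ n ih =>
      rcases Nat.eq_zero_or_pos n with h | h
      · subst h; rw [hp0]; norm_num
      · rw [hp n h]
        exact Finset.sum_nonneg fun k hk => by
          have hk' := Finset.mem_Icc.mp hk
          exact mul_nonneg (hf k) (ih _ (by omega))
  -- f n ≤ p n for n ≥ 1
  have hpf : ∀ n, 1 ≤ n → f n ≤ p n := by
    intro n hn
    rw [hp n hn]
    have := Finset.single_le_sum (f := fun k => f k * p (n - k))
      (fun i _ => mul_nonneg (hf i) (hpn _)) (Finset.mem_Icc.mpr ⟨hn, le_refl n⟩)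
    simpa [hp0] using this
  -- R ≤ L
  have hRleL : R ≤ L := by
    by_contra h
    push_neg at h
    obtain ⟨x, hx0, hLx, hxR⟩ : ∃ x : ℝ, 0 ≤ x ∧ L < x ∧ x < R :=
      ⟨(L + R) / 2, by linarith, by linarith, by linarith⟩
    have hsum : Summable (fun n => p n * x ^ n) := (hRspec x hx0).1 hxR
    have h1 : Summable (fun n : ℕ => p (n + 1) * x ^ (n + 1)) :=
      (summable_nat_add_iff (f := fun n => p n * x ^ n) 1).2 hsum
    have h2 : Summable (fun n : ℕ => f (n + 1) * x ^ (n + 1)) := by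
      refine Summable.of_nonneg_of_le
        (fun n => mul_nonneg (hf _) (pow_nonneg hx0 _)) (fun n => ?_) h1
      exact mul_le_mul_of_nonneg_right (hpf (n + 1) (by omega)) (pow_nonneg hx0 _)
    have hfs : Summable (fun n => f n * x ^ n) :=
      (summable_nat_add_iff (f := fun n => f n * x ^ n) 1).1 h2
    exact (hLspec x hx0).2 hLx hfs
  -- main implication
  have key : (∑' n : ℕ, ENNReal.ofReal (f (n + 1)) * ENNReal.ofReal L ^ (n + 1)) ≤ 1 →
      R = L := by
    intro hS
    -- partial sums of f k L^k over Icc 1 n are ≤ 1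
    have hpart : ∀ n : ℕ, ∑ k ∈ Finset.Icc 1 n, f k * L ^ k ≤ 1 := by
      intro n
      have hre : ∑ k ∈ Finset.Icc 1 n, f k * L ^ k
          = ∑ i ∈ Finset.range n, f (i + 1) * L ^ (i + 1) := by
        rw [← Finset.Ico_add_one_right_eq_Icc, Finset.sum_Ico_eq_sum_range]
        simp [add_comm]
      have h1 : ENNReal.ofReal (∑ i ∈ Finset.range n, f (i + 1) * L ^ (i + 1)) ≤ 1 := by
        rw [ENNReal.ofReal_sum_of_nonneg
          (fun i _ => mul_nonneg (hf _) (pow_nonneg hL0 _))]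
        calc ∑ i ∈ Finset.range n, ENNReal.ofReal (f (i + 1) * L ^ (i + 1))
            = ∑ i ∈ Finset.range n,
              ENNReal.ofReal (f (i + 1)) * ENNReal.ofReal L ^ (i + 1) := by
              refine Finset.sum_congr rfl fun i _ => ?_
              rw [ENNReal.ofReal_mul (hf _), ENNReal.ofReal_pow hL0]
          _ ≤ ∑' n : ℕ, ENNReal.ofReal (f (n + 1)) * ENNReal.ofReal L ^ (n + 1) :=
              ENNReal.sum_le_tsum _
          _ ≤ 1 := hS
      rw [hre]
      exact ENNReal.ofReal_le_one.mp h1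
    -- p n * L^n ≤ 1
    have hbound : ∀ n, p n * L ^ n ≤ 1 := by
      intro n
      induction n using Nat.strong_induction_on with
      | _ n ih =>
        rcases Nat.eq_zero_or_pos n with h | h
        · subst h; simp [hp0]
        · rw [hp n h, Finset.sum_mul]
          calc ∑ k ∈ Finset.Icc 1 n, f k * p (n - k) * L ^ n
              ≤ ∑ k ∈ Finset.Icc 1 n, f k * L ^ k := by
                refine Finset.sum_le_sum fun k hk => ?_
                have hk' := Finset.mem_Icc.mp hk
                have hLn : L ^ n = L ^ k * L ^ (n - k) := by
                  rw [← pow_add, Nat.add_sub_cancel' hk'.2]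
                calc f k * p (n - k) * L ^ n
                    = (f k * L ^ k) * (p (n - k) * L ^ (n - k)) := by rw [hLn]; ring
                  _ ≤ (f k * L ^ k) * 1 :=
                      mul_le_mul_of_nonneg_left (ih _ (by omega))
                        (mul_nonneg (hf k) (pow_nonneg hL0 k))
                  _ = f k * L ^ k := mul_one _
            _ ≤ 1 := hpart n
    -- now show L ≤ R
    refine le_antisymm hRleL ?_
    by_contra h
    push_neg at h
    have hLpos : 0 < L := lt_of_le_of_lt hR0 h
    obtain ⟨x, hx0, hRx, hxL⟩ : ∃ x : ℝ, 0 ≤ x ∧ R < x ∧ x < L :=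
      ⟨(R + L) / 2, by linarith, by linarith, by linarith⟩
    have hgeo : Summable (fun n : ℕ => (x / L) ^ n) :=
      summable_geometric_of_lt_one (div_nonneg hx0 hLpos.le)
        ((div_lt_one hLpos).mpr hxL)
    have hsum : Summable (fun n => p n * x ^ n) := by
      refine Summable.of_nonneg_of_le
        (fun n => mul_nonneg (hpn _) (pow_nonneg hx0 _)) (fun n => ?_) hgeo
      have hx : x ^ n = L ^ n * (x / L) ^ n := by
        rw [div_pow, mul_div_cancel₀ _ (pow_ne_zero n hLpos.ne')]
      calc p n * x ^ n = (p n * L ^ n) * (x / L) ^ n := by rw [hx]; ring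
        _ ≤ 1 * (x / L) ^ n :=
            mul_le_mul_of_nonneg_right (hbound n)
              (pow_nonneg (div_nonneg hx0 hLpos.le) n)
        _ = (x / L) ^ n := one_mul _
    exact (hRspec x hx0).2 hRx hsum
  refine ⟨key, fun hRlt => ?_⟩
  by_contra h
  push_neg at h
  have := key h
  rw [this] at hRlt
  exact lt_irrefl _ hRlt
end

section
/- Let β > 1 and let a : ℕ → ℕ satisfy a(1) = 1, ∑_{n≥1} a(n) β^{-n} = 1, ∑_{n≥1} n a(n) β^{-n} < ∞, and suppose the radius of convergence of ∑ a(n) zⁿ is 1/β. Define p(0) = 1 and p(n) = ∑_{k=1}^n a(k) p(n−k). Then the radius of convergence R of ∑ p(n) zⁿ equals 1/β, ∑_{n≥1} a(n) Rⁿ = 1, and ∑_{n≥1} n a(n) Rⁿ < ∞ (i.e., the associated renewal sequence is positive recurrent with R = 1/β). -/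
private lemma sum_Icc_one_eq (n : ℕ) (f : ℕ → ℝ) :
    ∑ k ∈ Finset.Icc 1 n, f k = ∑ j ∈ Finset.range n, f (j + 1) := by
  induction n with
  | zero => simp
  | succ m ih =>
      rw [Finset.sum_Icc_succ_top (by omega), ih, Finset.sum_range_succ]

/-- Positive recurrence of the renewal sequence built from a: the radius R of the
renewal series equals 1/β, ∑ a(n) Rⁿ = 1, and ∑ n a(n) Rⁿ < ∞. -/
theorem stmt_17 (β : ℝ) (hβ : 1 < β) (a : ℕ → ℕ) (h1 : a 1 = 1)
    (hsum : ∑' n : ℕ, (a (n + 1) : ℝ) * β⁻¹ ^ (n + 1) = 1)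
    (hmom : Summable (fun n : ℕ => (n : ℝ) * (a n : ℝ) * β⁻¹ ^ n))
    (hrad : IsRadius (fun n => (a n : ℝ)) (1 / β))
    (p : ℕ → ℕ) (hp0 : p 0 = 1)
    (hp : ∀ n : ℕ, 1 ≤ n → p n = ∑ k ∈ Finset.Icc 1 n, a k * p (n - k))
    (R : ℝ) (hR : IsRadius (fun n => (p n : ℝ)) R) :
    R = 1 / β ∧
      (∑' n : ℕ, (a (n + 1) : ℝ) * R ^ (n + 1) = 1) ∧
      Summable (fun n : ℕ => (n : ℝ) * (a n : ℝ) * R ^ n) := by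
  have hβ0 : (0:ℝ) < β := lt_trans one_pos hβ
  have hβinv : (0:ℝ) < 1 / β := by positivity
  -- summability of the a-series at β⁻¹
  have hS : Summable (fun n : ℕ => (a (n + 1) : ℝ) * β⁻¹ ^ (n + 1)) := by
    by_contra h
    rw [tsum_eq_zero_of_not_summable h] at hsum
    norm_num at hsum
  -- a(n+1) ≤ p(n+1)
  have hap : ∀ n : ℕ, a (n + 1) ≤ p (n + 1) := by
    intro n
    rw [hp (n + 1) (by omega)]
    have hmem : n + 1 ∈ Finset.Icc 1 (n + 1) := by simp
    calc a (n + 1) = a (n + 1) * p ((n + 1) - (n + 1)) := by simp [hp0]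
    _ ≤ ∑ k ∈ Finset.Icc 1 (n + 1), a k * p ((n + 1) - k) :=
        Finset.single_le_sum (f := fun k => a k * p ((n + 1) - k))
          (fun k _ => Nat.zero_le _) hmem
  -- boundedness: for 0 ≤ x ≤ 1/β, p n * xⁿ ≤ 1
  have hbd : ∀ x : ℝ, 0 ≤ x → x ≤ 1 / β → ∀ n : ℕ, (p n : ℝ) * x ^ n ≤ 1 := by
    intro x hx0 hx1 n
    induction n using Nat.strong_induction_on with
    | _ n ih =>
      rcases Nat.eq_zero_or_pos n with rfl | hn
      · simp [hp0]
      · rw [hp n hn]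
        push_cast
        rw [Finset.sum_mul]
        have hstep : ∀ k ∈ Finset.Icc 1 n,
            (a k : ℝ) * (p (n - k) : ℝ) * x ^ n ≤ (a k : ℝ) * x ^ k := by
          intro k hk
          simp only [Finset.mem_Icc] at hk
          have hxn : x ^ n = x ^ k * x ^ (n - k) := by
            rw [← pow_add]; congr 1; omega
          rw [hxn]
          have hle : (p (n - k) : ℝ) * x ^ (n - k) ≤ 1 := ih (n - k) (by omega)
          calc (a k : ℝ) * (p (n - k) : ℝ) * (x ^ k * x ^ (n - k))
              = ((a k : ℝ) * x ^ k) * ((p (n - k) : ℝ) * x ^ (n - k)) := by ring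
            _ ≤ ((a k : ℝ) * x ^ k) * 1 := by
                apply mul_le_mul_of_nonneg_left hle (by positivity)
            _ = (a k : ℝ) * x ^ k := by ring
        calc ∑ k ∈ Finset.Icc 1 n, (a k : ℝ) * (p (n - k) : ℝ) * x ^ n
            ≤ ∑ k ∈ Finset.Icc 1 n, (a k : ℝ) * x ^ k := Finset.sum_le_sum hstep
          _ = ∑ j ∈ Finset.range n, (a (j + 1) : ℝ) * x ^ (j + 1) :=
              sum_Icc_one_eq n _
          _ ≤ ∑ j ∈ Finset.range n, (a (j + 1) : ℝ) * β⁻¹ ^ (j + 1) := by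
              apply Finset.sum_le_sum
              intro j _
              have : x ^ (j + 1) ≤ β⁻¹ ^ (j + 1) := by
                apply pow_le_pow_left₀ hx0
                rwa [← one_div]
              exact mul_le_mul_of_nonneg_left this (by positivity)
          _ ≤ ∑' j : ℕ, (a (j + 1) : ℝ) * β⁻¹ ^ (j + 1) :=
              Summable.sum_le_tsum _ (fun j _ => by positivity) hS
          _ = 1 := hsum
  -- summability of the p-series for 0 ≤ x < 1/β
  have hpsum : ∀ x : ℝ, 0 ≤ x → x < 1 / β → Summable (fun n : ℕ => (p n : ℝ) * x ^ n) := by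
    intro x hx0 hx1
    obtain ⟨t, ht0, hxt, ht1⟩ : ∃ t : ℝ, 0 < t ∧ x < t ∧ t ≤ 1 / β :=
      ⟨(x + 1 / β) / 2, by positivity, by linarith, by linarith⟩
    have hgeo : Summable (fun n : ℕ => (x / t) ^ n) :=
      summable_geometric_of_lt_one (by positivity) (by rw [div_lt_one ht0]; exact hxt)
    apply Summable.of_nonneg_of_le (fun n => by positivity) _ hgeo
    intro n
    have hx : x ^ n = t ^ n * (x / t) ^ n := by
      rw [div_pow]
      field_simp
    calc (p n : ℝ) * x ^ n = ((p n : ℝ) * t ^ n) * (x / t) ^ n := by rw [hx]; ring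
      _ ≤ 1 * (x / t) ^ n := by
          apply mul_le_mul_of_nonneg_right (hbd t (le_of_lt ht0) ht1 n) (by positivity)
      _ = (x / t) ^ n := one_mul _
  -- R = 1/β
  have hReq : R = 1 / β := by
    rcases lt_trichotomy R (1 / β) with h | h | h
    · exfalso
      obtain ⟨x, hx0, hRx, hx1⟩ : ∃ x : ℝ, 0 ≤ x ∧ R < x ∧ x < 1 / β :=
        ⟨(R + 1 / β) / 2, by have := hR.1; linarith, by linarith, by linarith⟩
      exact (hR.2 x hx0).2 hRx (hpsum x hx0 hx1)
    · exact h
    · exfalso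
      obtain ⟨x, hx0, hxR, hx1⟩ : ∃ x : ℝ, 0 ≤ x ∧ x < R ∧ 1 / β < x :=
        ⟨(1 / β + R) / 2, by linarith, by linarith, by linarith⟩
      have hps : Summable (fun n : ℕ => (p n : ℝ) * x ^ n) := (hR.2 x hx0).1 hxR
      have has : Summable (fun n : ℕ => (a n : ℝ) * x ^ n) := by
        rw [← (summable_nat_add_iff 1)]
        apply Summable.of_nonneg_of_le (fun n => by positivity) _
          ((summable_nat_add_iff 1).mpr hps)
        intro n
        exact mul_le_mul_of_nonneg_right (by exact_mod_cast hap n) (by positivity)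
      exact (hrad.2 x hx0).2 hx1 has
  subst hReq
  rw [one_div]
  exact ⟨rfl, hsum, hmom⟩
end
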